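/- Let u : ℝ × ℝ^n → ℂ be smooth with u(t,·) Schwartz in x for each t, and depending smoothly on t in the Schwartz topology. For ε ∈ {+1, −1} define L_ε u := i ∂_t u − ε ⟨i∇⟩ u, and for j ∈ {1,…,n} define P_j u := t ∂_j u + x_j ∂_t u. Then for every such u, every ε, and every j: L_ε(P_j u) − P_j(L_ε u) = − i ε ⟨i∇⟩^{−1} ∂_j (L_ε u); that is, the commutator identity [L_ε, P] = − i ε ⟨i∇⟩^{−1} ∇ L_ε holds. -/

import Mathlib

open MeasureTheory Complex
open scoped ENNReal

noncomputable section

/-- The Japanese bracket of a frequency: `⟨ξ⟩ = (1 + 4π²|ξ|²)^{1/2}`. -/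
def jxi {n : ℕ} (ξ : EuclideanSpace ℝ (Fin n)) : ℝ :=
  Real.sqrt (1 + 4 * Real.pi ^ 2 * ‖ξ‖ ^ 2)

/-- The Bessel potential `⟨i∇⟩^s f = 𝓕⁻¹(⟨ξ⟩^s 𝓕f)`. -/
def bessel (n : ℕ) (s : ℝ) (f : EuclideanSpace ℝ (Fin n) → ℂ) :
    EuclideanSpace ℝ (Fin n) → ℂ :=
  FourierTransformInv.fourierInv (fun ξ => ((jxi ξ ^ s : ℝ) : ℂ) * FourierTransform.fourier f ξ)

/-- The `j`-th spatial partial derivative. -/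
def pd (n : ℕ) (j : Fin n) (f : EuclideanSpace ℝ (Fin n) → ℂ)
    (x : EuclideanSpace ℝ (Fin n)) : ℂ :=
  fderiv ℝ f x (EuclideanSpace.single j 1)


open Real SchwartzMap
open scoped FourierTransform RealInnerProductSpace ContDiff

set_option synthInstance.maxHeartbeats 1000000
set_option maxHeartbeats 1000000

variable {n : ℕ}

def qf (ξ : EuclideanSpace ℝ (Fin n)) : ℝ := 1 + 4 * π ^ 2 * ‖ξ‖ ^ 2

lemma one_le_qf (ξ : EuclideanSpace ℝ (Fin n)) : 1 ≤ qf ξ := by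
  have : (0:ℝ) ≤ 4 * π ^ 2 * ‖ξ‖ ^ 2 := by positivity
  simp [qf]; linarith

lemma qf_pos (ξ : EuclideanSpace ℝ (Fin n)) : 0 < qf ξ := lt_of_lt_of_le one_pos (one_le_qf ξ)

def brkt (n : ℕ) (p : ℝ) (ξ : EuclideanSpace ℝ (Fin n)) : ℝ := qf ξ ^ p

lemma brkt_pos (p : ℝ) (ξ : EuclideanSpace ℝ (Fin n)) : 0 < brkt n p ξ :=
  Real.rpow_pos_of_pos (qf_pos ξ) p

lemma contDiff_qf : ContDiff ℝ ∞ (qf (n := n)) :=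
  contDiff_const.add (contDiff_const.mul (contDiff_norm_sq ℝ))

lemma hasFDerivAt_qf (ξ : EuclideanSpace ℝ (Fin n)) :
    HasFDerivAt (qf (n := n)) ((8 * π ^ 2 : ℝ) • innerSL ℝ ξ) ξ := by
  have h1 : HasFDerivAt (fun x : EuclideanSpace ℝ (Fin n) => ‖x‖ ^ 2)
      (2 • (innerSL ℝ ξ)) ξ := (hasStrictFDerivAt_norm_sq ξ).hasFDerivAt
  have h2 := (h1.const_mul (4 * π ^ 2)).const_add 1
  refine h2.congr_fderiv ?_
  ext y
  simp [two_smul]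
  ring

lemma contDiff_brkt (p : ℝ) : ContDiff ℝ ∞ (brkt n p) := by
  rw [contDiff_iff_contDiffAt]
  intro ξ
  exact (contDiff_qf.contDiffAt).rpow_const_of_ne (ne_of_gt (qf_pos ξ))

lemma hasFDerivAt_brkt (p : ℝ) (ξ : EuclideanSpace ℝ (Fin n)) :
    HasFDerivAt (brkt n p) ((p * 8 * π ^ 2 * brkt n (p-1) ξ) • innerSL ℝ ξ) ξ := by
  have := (hasFDerivAt_qf ξ).rpow_const (p := p) (Or.inl (ne_of_gt (qf_pos ξ)))
  refine this.congr_fderiv ?_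
  rw [smul_smul]
  congr 1
  simp [brkt, qf]
  ring

lemma fderiv_brkt (p : ℝ) :
    fderiv ℝ (brkt n p) =
      fun ξ => (p * 8 * π ^ 2 * brkt n (p-1) ξ) • innerSL ℝ ξ := by
  funext ξ
  exact (hasFDerivAt_brkt p ξ).fderiv

lemma norm_itfd_clm {E : Type*} [NormedAddCommGroup E] [NormedSpace ℝ E]
    {W : Type*} [NormedAddCommGroup W] [NormedSpace ℝ W]
    (L : E →L[ℝ] W) (m : ℕ) (x : E) :
    ‖iteratedFDeriv ℝ m (⇑L) x‖ ≤ ‖L‖ * (1 + ‖x‖) := by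
  have h1 : (0:ℝ) ≤ ‖L‖ := norm_nonneg _
  have hx : (0:ℝ) ≤ ‖x‖ := norm_nonneg _
  match m with
  | 0 =>
    rw [norm_iteratedFDeriv_zero]
    calc ‖L x‖ ≤ ‖L‖ * ‖x‖ := L.le_opNorm x
    _ ≤ ‖L‖ * (1 + ‖x‖) := by nlinarith
  | 1 =>
    have : ‖iteratedFDeriv ℝ 0 (fderiv ℝ (⇑L)) x‖ = ‖iteratedFDeriv ℝ 1 (⇑L) x‖ :=
      norm_iteratedFDeriv_fderiv
    rw [← this, norm_iteratedFDeriv_zero, L.fderiv]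
    nlinarith
  | (m+2) =>
    have : ‖iteratedFDeriv ℝ (m+1) (fderiv ℝ (⇑L)) x‖ = ‖iteratedFDeriv ℝ (m+2) (⇑L) x‖ :=
      norm_iteratedFDeriv_fderiv
    rw [← this]
    have h2 : fderiv ℝ (⇑L) = fun _ => L := by
      funext y; exact L.fderiv
    rw [h2, iteratedFDeriv_const_of_ne (Nat.succ_ne_zero m)]
    simp
    positivity

lemma brkt_bound_zero (p : ℝ) (x : EuclideanSpace ℝ (Fin n)) :
    brkt n p x ≤ (1 + 4*π^2)^(⌈|p|⌉₊) * (1 + ‖x‖) ^ (2*⌈|p|⌉₊) := by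
  have h1 : brkt n p x ≤ qf x ^ ((⌈|p|⌉₊ : ℝ)) := by
    apply Real.rpow_le_rpow_of_exponent_le (one_le_qf x)
    exact le_trans (le_abs_self p) (Nat.le_ceil _)
  have h2 : qf x ≤ (1 + 4*π^2) * (1 + ‖x‖)^2 := by
    have hx : (0:ℝ) ≤ ‖x‖ := norm_nonneg _
    have hpi : (0:ℝ) < π ^ 2 := by positivity
    simp only [qf]
    nlinarith
  calc brkt n p x ≤ qf x ^ ((⌈|p|⌉₊ : ℝ)) := h1
  _ = qf x ^ (⌈|p|⌉₊) := by rw [Real.rpow_natCast]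
  _ ≤ ((1 + 4*π^2) * (1 + ‖x‖)^2) ^ (⌈|p|⌉₊) := by
      apply pow_le_pow_left₀ (le_of_lt (qf_pos x)) h2
  _ = (1 + 4*π^2)^(⌈|p|⌉₊) * (1 + ‖x‖) ^ (2*⌈|p|⌉₊) := by
      rw [mul_pow, ← pow_mul]

lemma brkt_iter_bound (N : ℕ) : ∀ (p : ℝ), ∃ (C : ℝ) (k : ℕ), 0 ≤ C ∧
    ∀ i ≤ N, ∀ x : EuclideanSpace ℝ (Fin n),
      ‖iteratedFDeriv ℝ i (brkt n p) x‖ ≤ C * (1 + ‖x‖) ^ k := by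
  induction N with
  | zero =>
    intro p
    refine ⟨(1 + 4*π^2)^(⌈|p|⌉₊), 2*⌈|p|⌉₊, by positivity, ?_⟩
    intro i hi x
    interval_cases i
    rw [norm_iteratedFDeriv_zero, Real.norm_eq_abs, abs_of_pos (brkt_pos p x)]
    exact brkt_bound_zero p x
  | succ N IH =>
    intro p
    obtain ⟨C1, k1, hC1, hB1⟩ := IH (p - 1)
    obtain ⟨C2, k2, hC2, hB2⟩ := IH p
    set c : ℝ := |p * 8 * π^2| with hc
    set M : ℝ := ‖(innerSL ℝ (E := EuclideanSpace ℝ (Fin n)))‖ with hM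
    have hM0 : 0 ≤ M := hM ▸ ContinuousLinearMap.opNorm_nonneg _
    refine ⟨max C2 (2^N * (c * C1 * M)), max k2 (k1 + 1), le_max_of_le_left hC2, ?_⟩
    intro i hi x
    have hx1 : (1:ℝ) ≤ 1 + ‖x‖ := by have := norm_nonneg x; linarith
    have hxpow : ∀ a b : ℕ, a ≤ b → (1+‖x‖)^a ≤ (1+‖x‖)^b := fun a b hab =>
      pow_le_pow_right₀ hx1 hab
    match i, hi with
    | 0, _ =>
      calc ‖iteratedFDeriv ℝ 0 (brkt n p) x‖ ≤ C2 * (1+‖x‖)^k2 := hB2 0 (Nat.zero_le _) x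
      _ ≤ max C2 (2^N * (c * C1 * M)) * (1+‖x‖)^(max k2 (k1+1)) := by
          apply mul_le_mul (le_max_left _ _) (hxpow _ _ (le_max_left _ _)) (by positivity)
            (le_trans hC2 (le_max_left _ _))
    | (m+1), hi =>
      have hm : m ≤ N := Nat.succ_le_succ_iff.mp hi
      have heq : ‖iteratedFDeriv ℝ m (fderiv ℝ (brkt n p)) x‖
          = ‖iteratedFDeriv ℝ (m+1) (brkt n p) x‖ := norm_iteratedFDeriv_fderiv
      rw [← heq, fderiv_brkt]
      have hsmul := norm_iteratedFDeriv_smul_le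
        (𝕜 := ℝ) (f := fun ξ => p * 8 * π^2 * brkt n (p-1) ξ)
        (g := fun ξ => innerSL ℝ ξ) (N := (∞ : WithTop ℕ∞))
        ((contDiff_const.mul (contDiff_brkt (p-1))))
        ((innerSL ℝ).contDiff) x (n := m) (by exact_mod_cast le_top)
      apply le_trans hsmul
      have hterm : ∀ l ∈ Finset.range (m+1), (m.choose l : ℝ)
            * ‖iteratedFDeriv ℝ l (fun ξ => p * 8 * π^2 * brkt n (p-1) ξ) x‖
            * ‖iteratedFDeriv ℝ (m-l) (fun ξ => innerSL ℝ ξ) x‖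
            ≤ (m.choose l : ℝ) * (c * (C1 * (1+‖x‖)^k1)) * (M * (1+‖x‖)) := by
          intro l hl
          have hlm : l ≤ N := le_trans (Nat.lt_succ_iff.mp (Finset.mem_range.mp hl)) hm
          have h1 : ‖iteratedFDeriv ℝ l (fun ξ => p * 8 * π^2 * brkt n (p-1) ξ) x‖
              ≤ c * (C1 * (1+‖x‖)^k1) := by
            have : (fun ξ : EuclideanSpace ℝ (Fin n) => p * 8 * π^2 * brkt n (p-1) ξ)
                = fun ξ => (p * 8 * π^2) • brkt n (p-1) ξ := by funext ξ; simp [smul_eq_mul]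
            rw [this, iteratedFDeriv_const_smul_apply'
              (ContDiff.contDiffAt ((contDiff_brkt (p-1)).of_le (by exact_mod_cast le_top))), norm_smul]
            apply mul_le_mul _ (hB1 l hlm x) (norm_nonneg _) (abs_nonneg _)
            simp only [hc, Real.norm_eq_abs]
            exact le_rfl
          have h2 : ‖iteratedFDeriv ℝ (m-l) (fun ξ => innerSL ℝ ξ) x‖ ≤ M * (1+‖x‖) :=
            norm_itfd_clm _ _ x
          have hch : (0:ℝ) ≤ (m.choose l : ℝ) := Nat.cast_nonneg _
          apply mul_le_mul (mul_le_mul le_rfl h1 (norm_nonneg _) hch) h2 (norm_nonneg _)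
          positivity
      apply le_trans (Finset.sum_le_sum hterm)
      have hsumeq : ∑ l ∈ Finset.range (m+1),
            (m.choose l : ℝ) * (c * (C1 * (1+‖x‖)^k1)) * (M * (1+‖x‖))
          = (2^m : ℝ) * ((c * (C1 * (1+‖x‖)^k1)) * (M * (1+‖x‖))) := by
        rw [← Finset.sum_mul, ← Finset.sum_mul, ← Nat.cast_sum, Nat.sum_range_choose]
        push_cast; ring
      rw [hsumeq]
      have h2N : (2:ℝ)^m ≤ 2^N := pow_le_pow_right₀ one_le_two hm
      calc (2^m : ℝ) * ((c * (C1 * (1+‖x‖)^k1)) * (M * (1+‖x‖)))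
          = (2^m * (c * C1 * M)) * (1+‖x‖)^(k1+1) := by ring
        _ ≤ (2^N * (c * C1 * M)) * (1+‖x‖)^(k1+1) := by
            apply mul_le_mul_of_nonneg_right _ (by positivity)
            apply mul_le_mul_of_nonneg_right h2N (by positivity)
        _ ≤ max C2 (2^N * (c * C1 * M)) * (1+‖x‖)^(max k2 (k1+1)) := by
            apply mul_le_mul (le_max_right _ _) (hxpow _ _ (le_max_right _ _)) (by positivity)
            exact le_trans (by positivity) (le_max_right _ _)

lemma brkt_temperate (p : ℝ) : Function.HasTemperateGrowth (brkt n p) := by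
  refine ⟨contDiff_brkt p, fun N => ?_⟩
  obtain ⟨C, k, _, hB⟩ := brkt_iter_bound N p
  exact ⟨k, C, fun x => hB N le_rfl x⟩


lemma Function.HasTemperateGrowth.clm_comp {E : Type*} [NormedAddCommGroup E] [NormedSpace ℝ E]
    {F : Type*} [NormedAddCommGroup F] [NormedSpace ℝ F]
    {G : Type*} [NormedAddCommGroup G] [NormedSpace ℝ G]
    (L : F →L[ℝ] G) {f : E → F} (hf : Function.HasTemperateGrowth f) :
    Function.HasTemperateGrowth (fun x => L (f x)) := by
  refine ⟨L.contDiff.comp hf.1, fun N => ?_⟩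
  obtain ⟨k, C, hB⟩ := hf.2 N
  refine ⟨k, ‖L‖ * C, fun x => ?_⟩
  have h1 : iteratedFDeriv ℝ N (⇑L ∘ f) x
      = L.compContinuousMultilinearMap (iteratedFDeriv ℝ N f x) :=
    L.iteratedFDeriv_comp_left (hf.1.contDiffAt (x := x)) (by exact_mod_cast le_top)
  have h2 : (fun x => L (f x)) = ⇑L ∘ f := rfl
  rw [h2, h1]
  calc ‖L.compContinuousMultilinearMap (iteratedFDeriv ℝ N f x)‖
      ≤ ‖L‖ * ‖iteratedFDeriv ℝ N f x‖ := L.norm_compContinuousMultilinearMap_le _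
  _ ≤ ‖L‖ * (C * (1 + ‖x‖) ^ k) := by
      exact mul_le_mul_of_nonneg_left (hB x) (norm_nonneg _)
  _ = ‖L‖ * C * (1 + ‖x‖) ^ k := by ring

/-- complexified bracket power -/
def brktC (n : ℕ) (p : ℝ) (ξ : EuclideanSpace ℝ (Fin n)) : ℂ := (brkt n p ξ : ℂ)

lemma brktC_temperate (p : ℝ) : Function.HasTemperateGrowth (brktC n p) :=
  Function.HasTemperateGrowth.clm_comp Complex.ofRealCLM (brkt_temperate p)

/-- complexified coordinate -/
def coordC (n : ℕ) (j : Fin n) (ξ : EuclideanSpace ℝ (Fin n)) : ℂ := ((ξ j : ℝ) : ℂ)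

lemma coordC_temperate (j : Fin n) : Function.HasTemperateGrowth (coordC n j) :=
  (Complex.ofRealCLM.comp (EuclideanSpace.proj (𝕜 := ℝ) j)).hasTemperateGrowth

/-- multiplication by `⟨ξ⟩^{2p}` as an operator on Schwartz space -/
def MulB (n : ℕ) (p : ℝ) :
    𝓢(EuclideanSpace ℝ (Fin n), ℂ) →L[ℝ] 𝓢(EuclideanSpace ℝ (Fin n), ℂ) :=
  SchwartzMap.bilinLeftCLM (ContinuousLinearMap.mul ℝ ℂ) (brktC_temperate p)

lemma MulB_apply (p : ℝ) (f : 𝓢(EuclideanSpace ℝ (Fin n), ℂ)) (ξ : EuclideanSpace ℝ (Fin n)) :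
    MulB n p f ξ = f ξ * brktC n p ξ := rfl

/-- multiplication by the `j`-th coordinate as an operator on Schwartz space -/
def MulX (n : ℕ) (j : Fin n) :
    𝓢(EuclideanSpace ℝ (Fin n), ℂ) →L[ℝ] 𝓢(EuclideanSpace ℝ (Fin n), ℂ) :=
  SchwartzMap.bilinLeftCLM (ContinuousLinearMap.mul ℝ ℂ) (coordC_temperate j)

lemma MulX_apply (j : Fin n) (f : 𝓢(EuclideanSpace ℝ (Fin n), ℂ)) (ξ : EuclideanSpace ℝ (Fin n)) :
    MulX n j f ξ = f ξ * ((ξ j : ℝ) : ℂ) := rfl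

/-- the partial derivative operator -/
def DJ (n : ℕ) (j : Fin n) :
    𝓢(EuclideanSpace ℝ (Fin n), ℂ) →L[ℝ] 𝓢(EuclideanSpace ℝ (Fin n), ℂ) :=
  LineDeriv.lineDerivOpCLM ℝ 𝓢(EuclideanSpace ℝ (Fin n), ℂ) (EuclideanSpace.single j (1:ℝ))

lemma DJ_apply (j : Fin n) (f : 𝓢(EuclideanSpace ℝ (Fin n), ℂ)) (x : EuclideanSpace ℝ (Fin n)) :
    DJ n j f x = fderiv ℝ f x (EuclideanSpace.single j 1) := rfl

/-- the Fourier transform -/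
def FTS (n : ℕ) :
    𝓢(EuclideanSpace ℝ (Fin n), ℂ) ≃L[ℂ] 𝓢(EuclideanSpace ℝ (Fin n), ℂ) :=
  FourierTransform.fourierCLE ℂ 𝓢(EuclideanSpace ℝ (Fin n), ℂ)

lemma FTS_apply (f : 𝓢(EuclideanSpace ℝ (Fin n), ℂ)) : ⇑(FTS n f) = 𝓕 ⇑f :=
  rfl

lemma FTS_symm_apply (f : 𝓢(EuclideanSpace ℝ (Fin n), ℂ)) : ⇑((FTS n).symm f) = 𝓕⁻ ⇑f :=
  SchwartzMap.fourierInv_coe f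


lemma fourier_pd (j : Fin n) (f : 𝓢(EuclideanSpace ℝ (Fin n), ℂ))
    (ξ : EuclideanSpace ℝ (Fin n)) :
    𝓕 (⇑(DJ n j f)) ξ = (2 * π * Complex.I) * ((ξ j : ℝ) : ℂ) * 𝓕 ⇑f ξ := by
  have hcoe : (fderiv ℝ ⇑f) = ⇑(SchwartzMap.fderivCLM ℝ _ _ f) := by
    funext x; exact (SchwartzMap.fderivCLM_apply ℝ f x).symm
  have hf' : Integrable (fderiv ℝ ⇑f) volume := by
    rw [hcoe]; exact (SchwartzMap.fderivCLM ℝ _ _ f).integrable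
  have hder := Real.fourier_fderiv f.integrable f.differentiable hf'
  have h3 := congrArg (fun T : EuclideanSpace ℝ (Fin n) →L[ℝ] ℂ =>
      T (EuclideanSpace.single j 1)) (congrFun hder ξ)
  rw [Real.fourier_eq,
    ContinuousLinearMap.integral_apply ((Real.fourierIntegral_convergent_iff ξ).2 hf')
      (EuclideanSpace.single j 1)] at h3
  have hL : ∀ v : EuclideanSpace ℝ (Fin n),
      (𝐞 (-⟪v, ξ⟫) • fderiv ℝ (⇑f) v) (EuclideanSpace.single j 1)
        = 𝐞 (-⟪v, ξ⟫) • (DJ n j f v) := by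
    intro v
    rfl
  simp only [hL] at h3
  have hR : (VectorFourier.fourierSMulRight (-innerSL ℝ) (𝓕 ⇑f) ξ) (EuclideanSpace.single j 1)
      = (2 * π * Complex.I) * ((ξ j : ℝ) : ℂ) * 𝓕 ⇑f ξ := by
    rw [VectorFourier.fourierSMulRight_apply]
    have : ((-innerSL ℝ) ξ) (EuclideanSpace.single j 1) = -(ξ j) := by
      simp [real_inner_comm, EuclideanSpace.inner_single_right]
    rw [this]
    simp only [neg_smul, smul_neg, neg_neg, real_smul, smul_eq_mul]
    push_cast
    ring
  rw [hR] at h3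
  rw [Real.fourier_eq]
  exact h3

lemma fourier_mulx (j : Fin n) (f : 𝓢(EuclideanSpace ℝ (Fin n), ℂ))
    (ξ : EuclideanSpace ℝ (Fin n)) :
    fderiv ℝ (𝓕 ⇑f) ξ (EuclideanSpace.single j 1)
      = (-(2 * π * Complex.I)) * 𝓕 (⇑(MulX n j f)) ξ := by
  have hint1 : Integrable (fun v : EuclideanSpace ℝ (Fin n) => ‖v‖ * ‖f v‖) volume := by
    have := f.integrable_pow_mul (μ := volume) 1
    simpa using this
  have hder := Real.fderiv_fourier f.integrable hint1
  have h3 := congrArg (fun T : EuclideanSpace ℝ (Fin n) →L[ℝ] ℂ =>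
      T (EuclideanSpace.single j 1)) (congrFun hder ξ)
  have hint2 : Integrable (VectorFourier.fourierSMulRight (innerSL ℝ) ⇑f) volume := by
    refine Integrable.mono' ((hint1.const_mul
      (2 * π * ‖(innerSL ℝ (E := EuclideanSpace ℝ (Fin n)))‖)))
      (f.continuous.aestronglyMeasurable.fourierSMulRight) ?_
    filter_upwards with v
    calc ‖VectorFourier.fourierSMulRight (innerSL ℝ) (⇑f) v‖
        ≤ 2 * π * ‖(innerSL ℝ (E := EuclideanSpace ℝ (Fin n)))‖ * ‖v‖ * ‖f v‖ :=
          VectorFourier.norm_fourierSMulRight_le _ _ _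
    _ = 2 * π * ‖(innerSL ℝ (E := EuclideanSpace ℝ (Fin n)))‖ * (‖v‖ * ‖f v‖) := by ring
  rw [Real.fourier_eq,
    ContinuousLinearMap.integral_apply ((Real.fourierIntegral_convergent_iff ξ).2 hint2)
      (EuclideanSpace.single j 1)] at h3
  have hL : ∀ v : EuclideanSpace ℝ (Fin n),
      (𝐞 (-⟪v, ξ⟫) • VectorFourier.fourierSMulRight (innerSL ℝ) (⇑f) v)
          (EuclideanSpace.single j 1)
        = (-(2 * π * Complex.I)) • (𝐞 (-⟪v, ξ⟫) • (MulX n j f v)) := by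
    intro v
    rw [show ∀ (c : Circle) (T : EuclideanSpace ℝ (Fin n) →L[ℝ] ℂ) w, (c • T) w = c • T w
      from fun _ _ _ => rfl, VectorFourier.fourierSMulRight_apply]
    have : (innerSL ℝ) v (EuclideanSpace.single j 1) = v j := by
      simp [real_inner_comm, EuclideanSpace.inner_single_right]
    rw [this, MulX_apply]
    rw [smul_comm]
    congr 1
    simp only [neg_smul, real_smul, smul_eq_mul]
    ring
  simp only [hL] at h3
  rw [integral_smul] at h3
  rw [h3, Real.fourier_eq]
  simp only [smul_eq_mul]

lemma pd_mulB (j : Fin n) (g : 𝓢(EuclideanSpace ℝ (Fin n), ℂ))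
    (ξ : EuclideanSpace ℝ (Fin n)) :
    fderiv ℝ (⇑(MulB n (2⁻¹) g)) ξ (EuclideanSpace.single j 1)
      = brktC n (2⁻¹) ξ * fderiv ℝ (⇑g) ξ (EuclideanSpace.single j 1)
        + (4 * π^2 * ((ξ j : ℝ) : ℂ)) * brktC n (-2⁻¹) ξ * g ξ := by
  have hb : HasFDerivAt (brktC n (2⁻¹))
      (Complex.ofRealCLM.comp ((2⁻¹ * 8 * π ^ 2 * brkt n (2⁻¹-1) ξ) • innerSL ℝ ξ)) ξ :=
    Complex.ofRealCLM.hasFDerivAt.comp ξ (hasFDerivAt_brkt 2⁻¹ ξ)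
  have hg : HasFDerivAt (⇑g) (fderiv ℝ (⇑g) ξ) ξ := g.differentiableAt.hasFDerivAt
  have hmul := hg.mul hb
  have hcoe : ⇑(MulB n (2⁻¹) g) = ⇑g * brktC n (2⁻¹) := rfl
  rw [hcoe, hmul.fderiv]
  rw [ContinuousLinearMap.add_apply, ContinuousLinearMap.smul_apply,
    ContinuousLinearMap.smul_apply, ContinuousLinearMap.comp_apply,
    ContinuousLinearMap.smul_apply]
  have h1 : (innerSL ℝ) ξ (EuclideanSpace.single j 1) = ξ j := by
    simp [real_inner_comm, EuclideanSpace.inner_single_right]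
  rw [h1]
  have h2 : brkt n (2⁻¹ - 1) ξ = brkt n (-2⁻¹) ξ := by norm_num
  rw [h2]
  simp only [smul_eq_mul, Complex.ofRealCLM_apply, Complex.real_smul, brktC]
  push_cast
  ring

lemma brkt_mul_inv (ξ : EuclideanSpace ℝ (Fin n)) :
    brktC n (2⁻¹) ξ * brktC n (-2⁻¹) ξ = 1 := by
  have : brkt n (2⁻¹) ξ * brkt n (-2⁻¹) ξ = 1 := by
    rw [brkt, brkt, ← Real.rpow_add (qf_pos ξ)]
    norm_num
  rw [brktC, brktC, ← Complex.ofReal_mul, this, Complex.ofReal_one]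

lemma jxi_eq (ξ : EuclideanSpace ℝ (Fin n)) : jxi ξ = brkt n (2⁻¹) ξ := by
  rw [jxi, brkt, qf, Real.sqrt_eq_rpow]
  norm_num

lemma jxi_rpow_one (ξ : EuclideanSpace ℝ (Fin n)) : jxi ξ ^ (1:ℝ) = brkt n (2⁻¹) ξ := by
  rw [Real.rpow_one, jxi_eq]

lemma jxi_rpow_neg_one (ξ : EuclideanSpace ℝ (Fin n)) :
    jxi ξ ^ (-1:ℝ) = brkt n (-2⁻¹) ξ := by
  rw [Real.rpow_neg_one, jxi_eq, brkt, brkt, ← Real.rpow_neg_one (qf ξ ^ (2⁻¹:ℝ)),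
    ← Real.rpow_mul (le_of_lt (qf_pos ξ))]
  norm_num


/-- The Bessel-type operator `⟨i∇⟩^{2p}` on Schwartz space. -/
def Bop (n : ℕ) (p : ℝ) :
    𝓢(EuclideanSpace ℝ (Fin n), ℂ) →L[ℝ] 𝓢(EuclideanSpace ℝ (Fin n), ℂ) :=
  (((FTS n).symm.toContinuousLinearMap).restrictScalars ℝ).comp
    ((MulB n p).comp (((FTS n).toContinuousLinearMap).restrictScalars ℝ))

lemma Bop_def (p : ℝ) (f : 𝓢(EuclideanSpace ℝ (Fin n), ℂ)) :
    Bop n p f = (FTS n).symm (MulB n p (FTS n f)) := rfl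

lemma FTS_Bop (p : ℝ) (f : 𝓢(EuclideanSpace ℝ (Fin n), ℂ)) :
    FTS n (Bop n p f) = MulB n p (FTS n f) := by
  rw [Bop_def]
  exact (FTS n).apply_symm_apply _

lemma pd_coe (j : Fin n) (f : 𝓢(EuclideanSpace ℝ (Fin n), ℂ)) :
    pd n j ⇑f = ⇑(DJ n j f) := by
  funext x; rfl

lemma bessel_one (f : 𝓢(EuclideanSpace ℝ (Fin n), ℂ)) :
    bessel n 1 ⇑f = ⇑(Bop n (2⁻¹) f) := by
  have h1 : (fun ξ => ((jxi ξ ^ (1:ℝ) : ℝ) : ℂ) * 𝓕 ⇑f ξ)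
      = ⇑(MulB n (2⁻¹) (FTS n f)) := by
    funext ξ
    rw [MulB_apply, FTS_apply, jxi_rpow_one, brktC, mul_comm]
  rw [bessel, h1, Bop_def, FTS_symm_apply]

lemma bessel_neg_one (f : 𝓢(EuclideanSpace ℝ (Fin n), ℂ)) :
    bessel n (-1) ⇑f = ⇑(Bop n (-2⁻¹) f) := by
  have h1 : (fun ξ => ((jxi ξ ^ (-1:ℝ) : ℝ) : ℂ) * 𝓕 ⇑f ξ)
      = ⇑(MulB n (-2⁻¹) (FTS n f)) := by
    funext ξ
    rw [MulB_apply, FTS_apply, jxi_rpow_neg_one, brktC, mul_comm]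
  rw [bessel, h1, Bop_def, FTS_symm_apply]

lemma DJ_smulC (j : Fin n) (c : ℂ) (f : 𝓢(EuclideanSpace ℝ (Fin n), ℂ)) :
    DJ n j (c • f) = c • DJ n j f := by
  ext x
  rw [SchwartzMap.smul_apply, DJ_apply, DJ_apply]
  have hc : ⇑(c • f) = fun y => c • f y := rfl
  rw [hc, fderiv_fun_const_smul f.differentiableAt c]
  rfl

lemma MulB_smulC (p : ℝ) (c : ℂ) (f : 𝓢(EuclideanSpace ℝ (Fin n), ℂ)) :
    MulB n p (c • f) = c • MulB n p f := by
  ext ξ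
  rw [SchwartzMap.smul_apply, MulB_apply, MulB_apply, SchwartzMap.smul_apply]
  simp [smul_eq_mul]
  ring

lemma Bop_smulC (p : ℝ) (c : ℂ) (f : 𝓢(EuclideanSpace ℝ (Fin n), ℂ)) :
    Bop n p (c • f) = c • Bop n p f := by
  rw [Bop_def, Bop_def, (FTS n).map_smul, MulB_smulC, (FTS n).symm.map_smul]


lemma DJ_Bop_comm (j : Fin n) (f : 𝓢(EuclideanSpace ℝ (Fin n), ℂ)) :
    DJ n j (Bop n (2⁻¹) f) = Bop n (2⁻¹) (DJ n j f) := by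
  apply (FTS n).injective
  rw [FTS_Bop]
  ext ξ
  have e1 : (FTS n (DJ n j (Bop n (2⁻¹) f))) ξ = 𝓕 (⇑(DJ n j (Bop n (2⁻¹) f))) ξ :=
    congrFun (FTS_apply _) ξ
  rw [e1, fourier_pd]
  have e2 : 𝓕 (⇑(Bop n (2⁻¹) f)) ξ = (MulB n (2⁻¹) (FTS n f)) ξ := by
    rw [← FTS_Bop]
    exact (congrFun (FTS_apply _) ξ).symm
  rw [e2, MulB_apply, MulB_apply]
  have e3 : (FTS n (DJ n j f)) ξ = 𝓕 (⇑(DJ n j f)) ξ := congrFun (FTS_apply _) ξ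
  rw [e3, fourier_pd]
  have e4 : (FTS n f) ξ = 𝓕 (⇑f) ξ := congrFun (FTS_apply _) ξ
  rw [e4]
  ring

lemma Bop_inv (f : 𝓢(EuclideanSpace ℝ (Fin n), ℂ)) :
    Bop n (-2⁻¹) (Bop n (2⁻¹) f) = f := by
  rw [Bop_def, FTS_Bop]
  have h : MulB n (-2⁻¹) (MulB n (2⁻¹) (FTS n f)) = FTS n f := by
    ext ξ
    rw [MulB_apply, MulB_apply, mul_assoc, brkt_mul_inv, mul_one]
  rw [h]
  exact (FTS n).symm_apply_apply f


lemma neg_two_pi_I_ne_zero : (-(2 * (π:ℂ) * Complex.I)) ≠ 0 := by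
  simp [Real.pi_ne_zero, Complex.I_ne_zero, Complex.ofReal_ne_zero]

lemma Bop_MulX_comm (j : Fin n) (f : 𝓢(EuclideanSpace ℝ (Fin n), ℂ)) :
    Bop n (2⁻¹) (MulX n j f)
      = MulX n j (Bop n (2⁻¹) f) - Bop n (-2⁻¹) (DJ n j f) := by
  apply (FTS n).injective
  rw [map_sub, FTS_Bop, FTS_Bop]
  ext ξ
  rw [SchwartzMap.sub_apply]
  have hfdcoe : fderiv ℝ (𝓕 ⇑f) = fderiv ℝ ⇑(FTS n f) := by
    rw [FTS_apply]
  -- LHS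
  have hA : (-(2 * (π:ℂ) * Complex.I)) * ((MulB n (2⁻¹) (FTS n (MulX n j f))) ξ)
      = ((DJ n j (FTS n f)) ξ) * brktC n (2⁻¹) ξ := by
    rw [MulB_apply]
    have h1 : (FTS n (MulX n j f)) ξ = 𝓕 (⇑(MulX n j f)) ξ := congrFun (FTS_apply _) ξ
    have h2 := fourier_mulx j f ξ
    rw [hfdcoe] at h2
    rw [h1, ← mul_assoc, ← h2, DJ_apply]
  -- B term
  have hB : (-(2 * (π:ℂ) * Complex.I)) * ((FTS n (MulX n j (Bop n (2⁻¹) f))) ξ)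
      = brktC n (2⁻¹) ξ * ((DJ n j (FTS n f)) ξ)
        + 4 * (π:ℂ)^2 * ((ξ j : ℝ):ℂ) * brktC n (-2⁻¹) ξ * ((FTS n f) ξ) := by
    have h1 : (FTS n (MulX n j (Bop n (2⁻¹) f))) ξ = 𝓕 (⇑(MulX n j (Bop n (2⁻¹) f))) ξ :=
      congrFun (FTS_apply _) ξ
    rw [h1]
    have h2 := fourier_mulx j (Bop n (2⁻¹) f) ξ
    have hcoe2 : fderiv ℝ (𝓕 ⇑(Bop n (2⁻¹) f)) = fderiv ℝ ⇑(MulB n (2⁻¹) (FTS n f)) := by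
      rw [← FTS_Bop, FTS_apply]
    rw [hcoe2] at h2
    rw [← h2, pd_mulB, DJ_apply]
  -- C term
  have hC : (MulB n (-2⁻¹) (FTS n (DJ n j f))) ξ
      = (2 * (π:ℂ) * Complex.I) * ((ξ j : ℝ):ℂ) * ((FTS n f) ξ) * brktC n (-2⁻¹) ξ := by
    rw [MulB_apply]
    have h1 : (FTS n (DJ n j f)) ξ = 𝓕 (⇑(DJ n j f)) ξ := congrFun (FTS_apply _) ξ
    have h2 : (FTS n f) ξ = 𝓕 (⇑f) ξ := congrFun (FTS_apply _) ξ
    rw [h1, fourier_pd, h2]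
  refine mul_left_cancel₀ neg_two_pi_I_ne_zero ?_
  rw [mul_sub, hA, hB, hC]
  linear_combination (-4 * (π:ℂ)^2 * ((ξ j : ℝ):ℂ) * ((FTS n f) ξ) * brktC n (-2⁻¹) ξ)
    * Complex.I_mul_I


/-- The commutator identity `[L_ε, P] = -iε ⟨i∇⟩⁻¹ ∇ L_ε`: for a smooth-in-time family `u(t)`
of Schwartz functions with first and second time derivatives `u'`, `u''` and
`L_ε u = i∂_t u - ε⟨i∇⟩u`, `P_j u = t ∂_j u + x_j ∂_t u`, one has
`L_ε(P_j u) - P_j(L_ε u) = -iε ⟨i∇⟩⁻¹ ∂_j (L_ε u)`; here `∂_t(P_j u)` and `∂_t(L_ε u)` are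
written out via `u'`, `u''`. -/
theorem commutator_L_P (n : ℕ) (ε : ℝ) (hε : ε = 1 ∨ ε = -1)
    (u u' u'' : ℝ → SchwartzMap (EuclideanSpace ℝ (Fin n)) ℂ)
    (hu : ∀ (t : ℝ) (x : EuclideanSpace ℝ (Fin n)),
      HasDerivAt (fun s => u s x) (u' t x) t)
    (hu' : ∀ (t : ℝ) (x : EuclideanSpace ℝ (Fin n)),
      HasDerivAt (fun s => u' s x) (u'' t x) t)
    (j : Fin n) (t : ℝ) (x : EuclideanSpace ℝ (Fin n))
    (Lu : EuclideanSpace ℝ (Fin n) → ℂ)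
    (hLu : ∀ y, Lu y = Complex.I * u' t y - (ε : ℂ) * bessel n 1 ⇑(u t) y) :
    (Complex.I * (pd n j ⇑(u t) x + (t : ℂ) * pd n j ⇑(u' t) x + ((x j : ℝ) : ℂ) * u'' t x)
        - (ε : ℂ) * bessel n 1
            (fun y => (t : ℂ) * pd n j ⇑(u t) y + ((y j : ℝ) : ℂ) * u' t y) x)
      - ((t : ℂ) * pd n j Lu x
        + ((x j : ℝ) : ℂ) * (Complex.I * u'' t x - (ε : ℂ) * bessel n 1 ⇑(u' t) x))
      = -Complex.I * (ε : ℂ) * bessel n (-1) (pd n j Lu) x := by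
  have hε2 : (ε:ℂ) * (ε:ℂ) = 1 := by rcases hε with h | h <;> subst h <;> norm_num
  set U : 𝓢(EuclideanSpace ℝ (Fin n), ℂ) := u t with hU
  set U' : 𝓢(EuclideanSpace ℝ (Fin n), ℂ) := u' t with hU'
  set LS : 𝓢(EuclideanSpace ℝ (Fin n), ℂ) :=
    Complex.I • U' - (ε:ℝ) • Bop n (2⁻¹) U with hLS
  have hLcoe : Lu = ⇑LS := by
    funext y
    rw [hLu y, hLS]
    rw [SchwartzMap.sub_apply, SchwartzMap.smul_apply, SchwartzMap.smul_apply,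
      bessel_one U]
    rw [Complex.real_smul, smul_eq_mul]
  have hWcoe : (fun y => (t : ℂ) * (DJ n j U) y + ((y j : ℝ) : ℂ) * U' y)
      = ⇑(t • DJ n j U + MulX n j U') := by
    funext y
    rw [SchwartzMap.add_apply, SchwartzMap.smul_apply, MulX_apply, Complex.real_smul]
    ring
  rw [hLcoe, pd_coe j LS, pd_coe j U, pd_coe j U', hWcoe, bessel_one U',
    bessel_one (t • DJ n j U + MulX n j U'), bessel_neg_one (DJ n j LS)]
  have hW2 : Bop n (2⁻¹) (t • DJ n j U + MulX n j U')
      = t • Bop n (2⁻¹) (DJ n j U)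
        + (MulX n j (Bop n (2⁻¹) U') - Bop n (-2⁻¹) (DJ n j U')) := by
    rw [map_add, (Bop n (2⁻¹)).map_smul, Bop_MulX_comm]
  have hDL : DJ n j LS = Complex.I • DJ n j U' - (ε:ℝ) • Bop n (2⁻¹) (DJ n j U) := by
    rw [hLS, map_sub, DJ_smulC, (DJ n j).map_smul, DJ_Bop_comm]
  have hBDL : Bop n (-2⁻¹) (DJ n j LS)
      = Complex.I • Bop n (-2⁻¹) (DJ n j U') - (ε:ℝ) • DJ n j U := by
    rw [hDL, map_sub, Bop_smulC, (Bop n (-2⁻¹)).map_smul, Bop_inv]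
  rw [hW2, hBDL, hDL]
  simp only [SchwartzMap.add_apply, SchwartzMap.sub_apply, SchwartzMap.smul_apply,
    MulX_apply, Complex.real_smul, smul_eq_mul]
  linear_combination ((ε:ℂ) * ((Bop n (-2⁻¹) (DJ n j U')) x)) * Complex.I_mul_I
    + (-(Complex.I) * ((DJ n j U) x)) * hε2

end
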